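/- arXiv:2402.09597 — 4 statements merged into one kernel-verified Lean document; each statement's English description precedes it below -/
import Mathlib

section
/- Every factor of length at least 17 of a Sturmian word contains a cube of period at most 5. -/
/-- `u` is a factor (contiguous block) of the infinite word `x`. -/
def FactorOf {α : Type*} (u : List α) (x : ℕ → α) : Prop :=
  ∃ i, u = (List.range u.length).map fun t => x (i + t)

/-- Subword complexity: number of distinct length-`n` factors of `x`. -/
noncomputable def Complexity {α : Type*} (x : ℕ → α) (n : ℕ) : ℕ :=
  Set.ncard {u : List α | u.length = n ∧ FactorOf u x}

/-- A Sturmian word: infinite binary word with exactly `n+1` factors of each length `n`. -/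
def Sturmian (x : ℕ → Bool) : Prop := ∀ n, Complexity x n = n + 1

/-- A balanced binary word: counts of each letter in equal-length factors differ by at most 1. -/
def BalancedWord (w : List Bool) : Prop :=
  ∀ u v : List Bool, u <:+: w → v <:+: w → u.length = v.length →
    ∀ a : Bool, ((u.count a : ℤ) - (v.count a : ℤ)).natAbs ≤ 1

/-- The finite word `w` has period `p`: `w[i] = w[i+p]` for all valid `i`. -/
def HasPeriodL {α : Type*} (w : List α) (p : ℕ) : Prop :=
  ∀ i, i + p < w.length → w[i]? = w[i + p]?

/-- A cube of period `j ≥ 1` ends at position `n` of the infinite word `x`. -/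
def CubeEndAt {α : Type*} (x : ℕ → α) (n : ℕ) : Prop :=
  ∃ i j, 1 ≤ j ∧ i + 3 * j = n ∧ ∀ t < 2 * j, x (i + t) = x (i + j + t)

/-- A cube of period `j ≥ 1` ends at position `n` of the finite word `w`. -/
def CubeEnd (w : List Bool) (j n : ℕ) : Prop :=
  1 ≤ j ∧ n ≤ w.length ∧ ∃ i, i + 3 * j = n ∧ ∀ t < 2 * j, w[i + t]? = w[i + j + t]?

/-- Encode a binary word as a natural number (letter `k` is bit `k`). -/
def enc : List Bool → ℕ
  | [] => 0
  | a :: w => Nat.bit a (enc w)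

/-- Does the word of length `n` encoded by `m` start with a cube of period `j ≤ 5`? -/
def cubeN (n m : ℕ) : Bool :=
  [1, 2, 3, 4, 5].any fun j =>
    decide (3 * j ≤ n) && decide (m % 2 ^ (2 * j) = (m / 2 ^ j) % 2 ^ (2 * j))

/-- Encodings of all binary words of length `n` containing no cube of period `≤ 5`. -/
def cfN : ℕ → List ℕ
  | 0 => [0]
  | n + 1 => ((cfN n).flatMap fun m => [2 * m, 2 * m + 1]).filter fun m => !cubeN (n + 1) m

/-- Every cube-free word of length 17 contains all four digrams. -/
def checkAll : Bool :=
  (cfN 17).all fun m => [0, 1, 2, 3].all fun d =>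
    (List.range 16).any fun i => (m / 2 ^ i) % 4 == d

lemma testBit_enc : ∀ (w : List Bool) (k : ℕ), (enc w).testBit k = w.getD k false := by
  intro w
  induction w with
  | nil => intro k; simp [enc]
  | cons a w ih =>
    intro k
    cases k with
    | zero => simp [enc, Nat.testBit_bit_zero]
    | succ k => simp [enc, Nat.testBit_bit_succ, ih]

lemma take_cube_of_nat {w : List Bool} {j : ℕ} (hj : 1 ≤ j) (h3 : 3 * j ≤ w.length)
    (h : enc w % 2 ^ (2 * j) = (enc w / 2 ^ j) % 2 ^ (2 * j)) :
    w.take (3 * j) = w.take j ++ w.take j ++ w.take j := by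
  have hper : ∀ k, k < 2 * j → w[k]? = w[j + k]? := by
    intro k hk
    have hb := congrArg (fun m => m.testBit k) h
    simp only [Nat.testBit_mod_two_pow] at hb
    rw [← Nat.shiftRight_eq_div_pow, Nat.testBit_shiftRight] at hb
    simp only [hk, decide_eq_true_eq, decide_true, Bool.true_and] at hb
    rw [testBit_enc, testBit_enc] at hb
    have hk1 : k < w.length := by omega
    have hk2 : j + k < w.length := by omega
    rw [List.getElem?_eq_getElem hk1, List.getElem?_eq_getElem hk2, Option.some_inj,
      ← List.getD_eq_getElem w false hk1, ← List.getD_eq_getElem w false hk2]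
    exact hb
  have hlj : (w.take j).length = j := by simp [List.length_take]; omega
  apply List.ext_getElem?
  intro n
  by_cases hn : n < 3 * j
  · rw [List.getElem?_take_of_lt hn]
    by_cases h1 : n < j
    · rw [List.getElem?_append_left (by simp [hlj]; omega),
        List.getElem?_append_left (by simp [hlj]; omega),
        List.getElem?_take_of_lt h1]
    · by_cases h2 : n < 2 * j
      · rw [List.getElem?_append_left (by simp [hlj]; omega),
          List.getElem?_append_right (by simp [hlj]; omega),
          List.getElem?_take_of_lt (by simp [hlj]; omega)]
        have hp := hper (n - j) (by omega)
        have he : j + (n - j) = n := by omega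
        rw [he] at hp
        rw [← hp]
        congr 1
        simp [hlj]
      · rw [List.getElem?_append_right (by simp [hlj]; omega),
          List.getElem?_take_of_lt (by simp [hlj]; omega)]
        have hp1 := hper (n - 2 * j) (by omega)
        have he1 : j + (n - 2 * j) = n - j := by omega
        rw [he1] at hp1
        have hp2 := hper (n - j) (by omega)
        have he2 : j + (n - j) = n := by omega
        rw [he2] at hp2
        rw [← hp2, ← hp1]
        congr 1
        simp [hlj]
        omega
  · rw [List.getElem?_eq_none (by simp [List.length_take]; omega),
      List.getElem?_eq_none (by simp [hlj]; omega)]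

lemma mem_cfN : ∀ (n : ℕ) (w : List Bool), w.length = n →
    (∀ i j, 1 ≤ j → i + 3 * j ≤ w.length →
      (w.drop i).take (3 * j) ≠
        (w.drop i).take j ++ (w.drop i).take j ++ (w.drop i).take j) →
    enc w ∈ cfN n := by
  intro n
  induction n with
  | zero =>
    intro w hw _
    rw [List.length_eq_zero_iff] at hw
    subst hw
    simp [cfN, enc]
  | succ n ih =>
    intro w hw hnc
    cases w with
    | nil => simp at hw
    | cons a w' =>
      have hw' : w'.length = n := by simpa using hw
      have hnc' : ∀ i j, 1 ≤ j → i + 3 * j ≤ w'.length →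
          (w'.drop i).take (3 * j) ≠
            (w'.drop i).take j ++ (w'.drop i).take j ++ (w'.drop i).take j := by
        intro i j hj hij h
        exact hnc (i + 1) j hj (by simp; omega) (by simpa using h)
      have hmem := ih w' hw' hnc'
      have hfalse : cubeN (n + 1) (enc (a :: w')) = false := by
        rw [← Bool.not_eq_true]
        intro hcube
        simp only [cubeN, List.any_eq_true, Bool.and_eq_true, decide_eq_true_eq] at hcube
        obtain ⟨j, hjmem, hjle, hjeq⟩ := hcube
        have hj1 : 1 ≤ j := by
          simp only [List.mem_cons, List.not_mem_nil, or_false] at hjmem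
          omega
        have hlw : (3 : ℕ) * j ≤ (a :: w').length := by rw [hw]; exact hjle
        have := take_cube_of_nat hj1 hlw hjeq
        exact hnc 0 j hj1 (by omega) (by simpa using this)
      simp only [cfN, List.mem_filter, List.mem_flatMap]
      refine ⟨⟨enc w', hmem, ?_⟩, by simp [hfalse]⟩
      cases a <;> simp [enc, Nat.bit_val]

set_option maxRecDepth 10000 in
set_option maxHeartbeats 1600000 in
lemma cfN_check : ∀ m ∈ cfN 17, ∀ d ∈ [0, 1, 2, 3],
    ∃ i, i < 16 ∧ (m / 2 ^ i) % 4 = d := by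
  have h : checkAll = true := by rfl
  unfold checkAll at h
  rw [List.all_eq_true] at h
  intro m hm
  have h2 := h m hm
  simp only [List.all_eq_true] at h2
  intro d hd
  have h3 := h2 d hd
  rw [List.any_eq_true] at h3
  obtain ⟨i, hi, he⟩ := h3
  exact ⟨i, by simpa using List.mem_range.mp hi, by simpa using he⟩

lemma digram_infix' {w : List Bool} (hw : w.length = 17) {i d : ℕ} (hi : i < 16)
    (hd : (enc w / 2 ^ i) % 4 = d) (b0 b1 : Bool)
    (h0 : d.testBit 0 = b0) (h1 : d.testBit 1 = b1) :
    [b0, b1] <:+: w := by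
  have hb : ∀ r : ℕ, r < 2 → w[i + r]? = some (d.testBit r) := by
    intro r hr
    have ht : d.testBit r = (enc w).testBit (i + r) := by
      rw [← hd]
      have h4 : (4 : ℕ) = 2 ^ 2 := rfl
      rw [h4, Nat.testBit_mod_two_pow, ← Nat.shiftRight_eq_div_pow, Nat.testBit_shiftRight]
      simp [hr]
    rw [testBit_enc] at ht
    have hlt : i + r < w.length := by omega
    rw [List.getElem?_eq_getElem hlt, ht, List.getD_eq_getElem w false hlt]
  have heq : [b0, b1] = (w.drop i).take 2 := by
    apply List.ext_getElem?
    intro n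
    match n with
    | 0 =>
      rw [List.getElem?_take_of_lt (by omega), List.getElem?_drop, hb 0 (by omega), ← h0]
      rfl
    | 1 =>
      rw [List.getElem?_take_of_lt (by omega), List.getElem?_drop, hb 1 (by omega), ← h1]
      rfl
    | (n + 2) =>
      rw [List.getElem?_eq_none (by simp), List.getElem?_eq_none (by simp)]
  rw [heq]
  exact (List.take_prefix _ _).isInfix.trans (List.drop_suffix _ _).isInfix

lemma factorOf_of_infix {x : ℕ → Bool} {u v : List Bool}
    (hu : FactorOf u x) (hv : v <:+: u) : FactorOf v x := by
  obtain ⟨i, hi⟩ := hu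
  obtain ⟨s, t, hst⟩ := hv
  have hu_get : ∀ m, m < u.length → u[m]? = some (x (i + m)) := by
    intro m hm
    conv_lhs => rw [hi]
    rw [List.getElem?_map, List.getElem?_range hm]
    rfl
  refine ⟨i + s.length, List.ext_getElem? fun n => ?_⟩
  by_cases hn : n < v.length
  · have hlen : s.length + n < u.length := by
      rw [← hst]; simp; omega
    have h1 : u[s.length + n]? = v[n]? := by
      rw [← hst, List.getElem?_append_left (by simp; omega),
        List.getElem?_append_right (by omega)]
      congr 1
      omega
    have h2 : ((List.range v.length).map fun t => x (i + s.length + t))[n]?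
        = some (x (i + s.length + n)) := by
      rw [List.getElem?_map, List.getElem?_range hn]
      rfl
    rw [h2, ← h1, hu_get _ hlen]
    congr 2
    omega
  · rw [List.getElem?_eq_none (by omega), List.getElem?_eq_none (by simp; omega)]

theorem stmt5 (x : ℕ → Bool) (hx : Sturmian x) (u : List Bool)
    (hu : FactorOf u x) (hlen : 17 ≤ u.length) :
    ∃ v : List Bool, v ≠ [] ∧ v.length ≤ 5 ∧ (v ++ v ++ v) <:+: u := by
  set w := u.take 17 with hwdef
  have hw17 : w.length = 17 := by
    simp [hwdef, List.length_take]; omega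
  have hwinf : w <:+: u := (List.take_prefix 17 u).isInfix
  by_cases hc : ∃ i j, 1 ≤ j ∧ i + 3 * j ≤ 17 ∧ j ≤ 5 ∧
      (w.drop i).take (3 * j) =
        (w.drop i).take j ++ (w.drop i).take j ++ (w.drop i).take j
  · obtain ⟨i, j, hj1, hij, hj5, heq⟩ := hc
    refine ⟨(w.drop i).take j, ?_, ?_, ?_⟩
    · have hl : ((w.drop i).take j).length = j := by
        simp [List.length_take, List.length_drop, hw17]
        omega
      intro hnil
      rw [hnil] at hl
      simp at hl
      omega
    · simp [List.length_take, List.length_drop, hw17]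
      omega
    · rw [← heq]
      have h1 : (w.drop i).take (3 * j) <:+: w :=
        (List.take_prefix _ _).isInfix.trans (List.drop_suffix _ _).isInfix
      exact h1.trans hwinf
  · exfalso
    have hnc : ∀ i j, 1 ≤ j → i + 3 * j ≤ w.length →
        (w.drop i).take (3 * j) ≠
          (w.drop i).take j ++ (w.drop i).take j ++ (w.drop i).take j := by
      intro i j hj hij heq
      exact hc ⟨i, j, hj, by omega, by omega, heq⟩
    have hall := cfN_check (enc w) (mem_cfN 17 w hw17 hnc)
    have hdig : ∀ p ∈ [[false, false], [false, true], [true, false], [true, true]],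
        p <:+: w := by
      intro p hp
      fin_cases hp
      · obtain ⟨i, hi, hd⟩ := hall 0 (by simp)
        exact digram_infix' hw17 hi hd false false (by decide) (by decide)
      · obtain ⟨i, hi, hd⟩ := hall 2 (by simp)
        exact digram_infix' hw17 hi hd false true (by decide) (by decide)
      · obtain ⟨i, hi, hd⟩ := hall 1 (by simp)
        exact digram_infix' hw17 hi hd true false (by decide) (by decide)
      · obtain ⟨i, hi, hd⟩ := hall 3 (by simp)
        exact digram_infix' hw17 hi hd true true (by decide) (by decide)
    have hfac : ∀ p ∈ [[false, false], [false, true], [true, false], [true, true]],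
        p.length = 2 ∧ FactorOf p x := by
      intro p hp
      refine ⟨?_, factorOf_of_infix hu ((hdig p hp).trans hwinf)⟩
      fin_cases hp <;> rfl
    have hx2 : Set.ncard {v : List Bool | v.length = 2 ∧ FactorOf v x} = 3 := hx 2
    have hSfin : {v : List Bool | v.length = 2 ∧ FactorOf v x}.Finite := by
      by_contra h
      rw [Set.Infinite.ncard h] at hx2
      omega
    set T : Finset (List Bool) :=
      {[false, false], [false, true], [true, false], [true, true]} with hT
    have hTS : ↑T ⊆ {v : List Bool | v.length = 2 ∧ FactorOf v x} := by
      intro p hp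
      simp only [hT, Finset.coe_insert, Finset.coe_singleton, Set.mem_insert_iff,
        Set.mem_singleton_iff] at hp
      rcases hp with h | h | h | h <;> subst h <;> exact hfac _ (by simp)
    have hcard : T.card ≤ Set.ncard {v : List Bool | v.length = 2 ∧ FactorOf v x} := by
      rw [← Set.ncard_coe_finset]
      exact Set.ncard_le_ncard hTS hSfin
    have hT4 : T.card = 4 := by decide
    omega
end

section
/- Let Σ be a finite alphabet, h : ℕ → ℕ a function, and S a nonempty set of finite words over Σ. Suppose every uniformly recurrent right-infinite word x with subword complexity p_x(n) ≤ h(n) for all n contains some word of S as a factor. Then there exist a finite subset S₀ ⊆ S and a natural number N such that for every right-infinite word x with p_x(n) ≤ h(n) for all n, every factor of x of length N contains a word of S₀ as a factor. -/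
/-- `x` is uniformly recurrent: every factor occurs in every sufficiently long factor. -/
def UniformlyRecurrent {α : Type*} (x : ℕ → α) : Prop :=
  ∀ u : List α, FactorOf u x → ∃ L, ∀ v : List α, FactorOf v x → L ≤ v.length → u <:+: v

namespace Stmt7Aux

variable {A : Type*}

/-- The factor of `x` of length `n` starting at position `i`. -/
def seg (x : ℕ → A) (i n : ℕ) : List A := (List.range n).map fun t => x (i + t)

@[simp] lemma seg_length (x : ℕ → A) (i n : ℕ) : (seg x i n).length = n := by simp [seg]

lemma seg_add (x : ℕ → A) (i m n : ℕ) :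
    seg x i (m + n) = seg x i m ++ seg x (i + m) n := by
  simp only [seg, List.range_add, List.map_append, List.map_map]
  congr 1
  simp [Function.comp_def, Nat.add_assoc]

lemma factorOf_of_infix {x : ℕ → A} {u w : List A} (hw : FactorOf w x) (huw : u <:+: w) :
    FactorOf u x := by
  obtain ⟨i, hi⟩ := hw
  obtain ⟨p, s, hps⟩ := huw
  have hw' : w = seg x i w.length := hi
  have hlen : w.length = p.length + (u.length + s.length) := by
    rw [← hps]; simp only [List.length_append]; omega
  rw [hlen, seg_add, seg_add] at hw'
  have h1 : p ++ (u ++ s) =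
      seg x i p.length ++ (seg x (i + p.length) u.length ++
        seg x (i + p.length + u.length) s.length) := by
    rw [← List.append_assoc, hps]; exact hw'
  have h2 := (List.append_inj h1 (by simp)).2
  have h3 := (List.append_inj h2 (by simp)).1
  exact ⟨i + p.length, h3⟩

/-- A "good" language: factorial (closed under factors) and has words of every length. -/
def Good (L : Set (List A)) : Prop :=
  (∀ ⦃w⦄, w ∈ L → ∀ ⦃u⦄, u <:+: w → u ∈ L) ∧ (∀ n, ∃ w ∈ L, w.length = n)

def sl (L : Set (List A)) (n : ℕ) : Set (List A) := {w ∈ L | w.length = n}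

lemma sl_finite [Finite A] (L : Set (List A)) (n : ℕ) : (sl L n).Finite :=
  (List.finite_length_eq A n).subset fun _ hw => hw.2

lemma good_sInter [Finite A] {c : Set (Set (List A))} (hc : IsChain (· ⊆ ·) c)
    (hne : c.Nonempty) (hg : ∀ L ∈ c, Good L) : Good (⋂₀ c) := by
  classical
  constructor
  · intro w hw u hu
    rw [Set.mem_sInter] at hw ⊢
    intro L hL
    exact (hg L hL).1 (hw L hL) hu
  · intro n
    obtain ⟨L0, hL0⟩ := hne
    have hwit : ∃ m, ∃ L, L ∈ c ∧ (sl L n).ncard = m := ⟨_, L0, hL0, rfl⟩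
    obtain ⟨L, hLc, hLm⟩ := Nat.find_spec hwit
    obtain ⟨w, hwL, hwlen⟩ := (hg L hLc).2 n
    refine ⟨w, ?_, hwlen⟩
    rw [Set.mem_sInter]
    intro L' hL'
    rcases hc.total hLc hL' with hsub | hsub
    · exact hsub hwL
    · have hsl : sl L' n ⊆ sl L n := fun u hu => ⟨hsub hu.1, hu.2⟩
      have hcard : (sl L n).ncard ≤ (sl L' n).ncard := by
        rw [hLm]; exact Nat.find_min' hwit ⟨L', hL', rfl⟩
      have heq : sl L' n = sl L n :=
        Set.eq_of_subset_of_ncard_le hsl hcard (sl_finite L n)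
      have hw' : w ∈ sl L' n := by rw [heq]; exact ⟨hwL, hwlen⟩
      exact hw'.1

/-- Words extendable on the right by arbitrarily long words within `L`. -/
def Ext (L : Set (List A)) : Set (List A) :=
  {w | ∀ n, ∃ s : List A, n ≤ s.length ∧ w ++ s ∈ L}

lemma Ext_subset {L : Set (List A)} (hL : Good L) : Ext L ⊆ L := by
  intro w hw
  obtain ⟨s, _, hs⟩ := hw 0
  exact hL.1 hs (List.prefix_append w s).isInfix

lemma Ext_good [Finite A] {L : Set (List A)} (hL : Good L) : Good (Ext L) := by
  classical
  constructor
  · rintro w hw u ⟨p, s', hps⟩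
    intro n
    obtain ⟨s, hslen, hs⟩ := hw n
    have h5 : u ++ (s' ++ s) <:+: w ++ s := ⟨p, [], by rw [← hps]; simp⟩
    exact ⟨s' ++ s, by simp; omega, hL.1 hs h5⟩
  · intro n
    haveI : Finite {l : List A // l.length = n} := (List.finite_length_eq A n).to_subtype
    choose W hWL hWlen using hL.2
    let f : ℕ → {l : List A // l.length = n} := fun m =>
      ⟨(W (n + m)).take n, by rw [List.length_take, hWlen]; exact Nat.min_eq_left (by omega)⟩
    obtain ⟨⟨p, hp⟩, hfib⟩ := Finite.exists_infinite_fiber f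
    refine ⟨p, ?_, hp⟩
    intro n'
    have hinf : (f ⁻¹' {⟨p, hp⟩}).Infinite := Set.infinite_coe_iff.mp hfib
    obtain ⟨m, hm, hmgt⟩ := hinf.exists_gt n'
    have hval : (W (n + m)).take n = p := congrArg Subtype.val (Set.mem_singleton_iff.mp hm)
    refine ⟨(W (n + m)).drop n, ?_, ?_⟩
    · rw [List.length_drop, hWlen]; omega
    · rw [← hval, List.take_append_drop]
      exact hWL (n + m)

lemma exists_minimal_good [Finite A] {K : Set (List A)} (hK : Good K) :
    ∃ M, M ⊆ K ∧ Good M ∧ (∀ w ∈ M, ∃ a : A, w ++ [a] ∈ M) ∧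
      (∀ u ∈ M, ∃ N, ∀ w ∈ M, N ≤ w.length → u <:+: w) := by
  classical
  set coll : Set (Set (List A)) := {L | L ⊆ K ∧ Good L} with hcoll
  have hzc : ∀ c ⊆ coll, IsChain (· ⊆ ·) c → c.Nonempty →
      ∃ lb ∈ coll, ∀ s ∈ c, lb ⊆ s := by
    intro c hcs hchain hcne
    obtain ⟨L0, hL0⟩ := hcne
    refine ⟨⋂₀ c, ⟨(Set.sInter_subset_of_mem hL0).trans (hcs hL0).1,
      good_sInter hchain ⟨L0, hL0⟩ fun L hL => (hcs hL).2⟩,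
      fun s hs => Set.sInter_subset_of_mem hs⟩
  obtain ⟨M, hMK0, hMmin⟩ := zorn_superset_nonempty coll hzc K ⟨Set.Subset.rfl, hK⟩
  have hMcoll : M ∈ coll := hMmin.1
  have hMK' : M ⊆ K := hMcoll.1
  have hMgood : Good M := hMcoll.2
  have hMmin' : ∀ L ∈ coll, L ⊆ M → M ⊆ L := fun L hL hLM => hMmin.2 hL hLM
  refine ⟨M, hMK', hMgood, ?_, ?_⟩
  · have hExt : M ⊆ Ext M :=
      hMmin' (Ext M) ⟨(Ext_subset hMgood).trans hMK', Ext_good hMgood⟩ (Ext_subset hMgood)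
    intro w hw
    obtain ⟨s, hslen, hs⟩ := hExt hw 1
    match s, hslen with
    | b :: s', _ =>
      exact ⟨b, hMgood.1 hs ⟨[], s', by simp⟩⟩
  · intro u hu
    by_contra hcon
    push_neg at hcon
    set L' : Set (List A) := {w ∈ M | ¬ u <:+: w} with hL'
    have hgood' : Good L' := by
      constructor
      · rintro w ⟨hwM, hwu⟩ t ht
        exact ⟨hMgood.1 hwM ht, fun hc => hwu (hc.trans ht)⟩
      · intro n
        obtain ⟨w, hwM, hwlen, hwu⟩ := hcon n
        refine ⟨w.take n, ⟨hMgood.1 hwM (w.take_prefix n).isInfix,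
          fun hc => hwu (hc.trans (w.take_prefix n).isInfix)⟩, ?_⟩
        rw [List.length_take]; exact Nat.min_eq_left hwlen
    have hMsub : M ⊆ L' :=
      hMmin' L' ⟨fun w hw => hMK' hw.1, hgood'⟩ (fun w hw => hw.1)
    exact (hMsub hu).2 (List.infix_refl u)

def pref (f : List A → A) : ℕ → List A
  | 0 => []
  | n + 1 => pref f n ++ [f (pref f n)]

@[simp] lemma pref_length (f : List A → A) (n : ℕ) : (pref f n).length = n := by
  induction n with
  | zero => rfl
  | succ n ih => simp [pref, ih]

lemma exists_word {M : Set (List A)} (hM : Good M)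
    (hext : ∀ w ∈ M, ∃ a : A, w ++ [a] ∈ M) :
    ∃ z : ℕ → A, ∀ v : List A, FactorOf v z → v ∈ M := by
  classical
  have hA : Nonempty A := by
    obtain ⟨w, _, hwlen⟩ := hM.2 1
    match w, hwlen with
    | a :: _, _ => exact ⟨a⟩
  choose! f hf using hext
  have hFmem : ∀ n, pref f n ∈ M := by
    intro n
    induction n with
    | zero =>
      obtain ⟨w, hw, hwl⟩ := hM.2 0
      rw [List.length_eq_zero_iff] at hwl
      subst hwl
      exact hw
    | succ n ih => exact hf _ ih
  set z : ℕ → A := fun n => ((pref f (n + 1))[n]?).getD hA.some with hzdef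
  have hz : ∀ n, z n = f (pref f n) := by
    intro n
    have e : pref f (n + 1) = pref f n ++ [f (pref f n)] := rfl
    rw [hzdef]
    simp only [e]
    rw [List.getElem?_append_right (by simp)]
    simp
  have hpref : ∀ n, pref f n = seg z 0 n := by
    intro n
    induction n with
    | zero => rfl
    | succ n ih =>
      have e : pref f (n + 1) = pref f n ++ [f (pref f n)] := rfl
      have hseg1 : seg z 0 (n + 1) = seg z 0 n ++ [z n] := by
        rw [seg_add]; simp [seg, List.range_succ]
      rw [e, hseg1, hz, ih]
  refine ⟨z, ?_⟩
  intro v hv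
  obtain ⟨i, hi⟩ := hv
  have hv' : v = seg z i v.length := hi
  have hsplit : seg z 0 (i + v.length) = seg z 0 i ++ seg z i v.length := by
    simpa using seg_add z 0 i v.length
  have hinf : v <:+: pref f (i + v.length) := by
    rw [hpref (i + v.length), hsplit, ← hv']
    exact (List.suffix_append _ _).isInfix
  exact hM.1 (hFmem _) hinf

end Stmt7Aux

open Stmt7Aux in
theorem stmt7 {A : Type*} [Fintype A] (h : ℕ → ℕ) (S : Set (List A)) (hS : S.Nonempty)
    (hyp : ∀ x : ℕ → A, UniformlyRecurrent x → (∀ n, Complexity x n ≤ h n) →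
      ∃ u ∈ S, FactorOf u x) :
    ∃ S₀ : Set (List A), S₀ ⊆ S ∧ S₀.Finite ∧ ∃ N : ℕ,
      ∀ x : ℕ → A, (∀ n, Complexity x n ≤ h n) →
        ∀ v : List A, FactorOf v x → v.length = N → ∃ u ∈ S₀, u <:+: v := by
  classical
  by_contra hcon
  push_neg at hcon
  have hstep : ∀ k : ℕ, ∃ x : ℕ → A, (∀ n, Complexity x n ≤ h n) ∧
      ∃ v : List A, FactorOf v x ∧ v.length = k ∧ ∀ u ∈ S, u.length ≤ k → ¬ u <:+: v := by
    intro k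
    obtain ⟨x, hx, v, hv1, hv2, hv3⟩ := hcon {u ∈ S | u.length ≤ k} (fun u hu => hu.1)
      ((List.finite_length_le A k).subset fun u hu => hu.2) k
    exact ⟨x, hx, v, hv1, hv2, fun u huS hul => hv3 u ⟨huS, hul⟩⟩
  choose x hx v hv hvlen hvavoid using hstep
  set U : Ultrafilter ℕ := Filter.hyperfilter ℕ with hU
  have hco : ∀ n : ℕ, {k : ℕ | n ≤ k} ∈ U := by
    intro n
    have h1 : {k : ℕ | k < n}ᶜ ∈ Filter.hyperfilter ℕ :=
      Filter.compl_mem_hyperfilter_of_finite (Set.finite_lt_nat n)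
    convert h1 using 1
    ext k; simp [not_lt]
  set K : Set (List A) := {w : List A | {k | w <:+: v k} ∈ U} with hKdef
  have hKfac : ∀ ⦃w⦄, w ∈ K → ∀ ⦃u⦄, u <:+: w → u ∈ K := by
    intro w hw u hu
    exact Filter.mem_of_superset hw fun k hk => hu.trans hk
  have hKsl : ∀ n, ∃ w ∈ K, w.length = n := by
    intro n
    by_contra hnone
    push_neg at hnone
    have hcompl : (⋂ w ∈ {w : List A | w.length = n}, {k | w <:+: v k}ᶜ) ∈ U := by
      refine (Filter.biInter_mem (List.finite_length_eq A n)).2 fun w hw => ?_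
      exact (Ultrafilter.compl_mem_iff_notMem).2 fun hmem => hnone w hmem hw
    have hbig : ((⋂ w ∈ {w : List A | w.length = n}, {k | w <:+: v k}ᶜ) ∩ {k | n ≤ k}) ∈ U :=
      Filter.inter_mem hcompl (hco n)
    obtain ⟨k, hk1, hk2⟩ := Filter.nonempty_of_mem hbig
    have htake : ((v k).take n).length = n := by
      rw [List.length_take, hvlen]; exact Nat.min_eq_left hk2
    have := Set.mem_iInter₂.mp hk1 ((v k).take n) htake
    exact this (((v k).take_prefix n).isInfix)
  have hKgood : Good K := ⟨hKfac, hKsl⟩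
  have hKcard : ∀ n, {w ∈ K | w.length = n}.ncard ≤ h n := by
    intro n
    set T := {w ∈ K | w.length = n} with hT
    have hTfin : T.Finite := (List.finite_length_eq A n).subset fun w hw => hw.2
    have hbig : (⋂ w ∈ T, {k | w <:+: v k}) ∈ U :=
      (Filter.biInter_mem hTfin).2 fun w hw => hw.1
    obtain ⟨k, hk⟩ := Filter.nonempty_of_mem hbig
    have hsub : T ⊆ {u : List A | u.length = n ∧ FactorOf u (x k)} := by
      intro w hw
      have hwvk : w <:+: v k := Set.mem_iInter₂.mp hk w hw
      exact ⟨hw.2, factorOf_of_infix (hv k) hwvk⟩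
    calc T.ncard ≤ {u : List A | u.length = n ∧ FactorOf u (x k)}.ncard :=
          Set.ncard_le_ncard hsub ((List.finite_length_eq A n).subset fun u hu => hu.1)
      _ = Complexity (x k) n := rfl
      _ ≤ h n := hx k n
  obtain ⟨M, hMK, hMgood, hMext, hMrec⟩ := exists_minimal_good hKgood
  obtain ⟨z, hzM⟩ := exists_word hMgood hMext
  have hzcomp : ∀ n, Complexity z n ≤ h n := by
    intro n
    have hsub : {u : List A | u.length = n ∧ FactorOf u z} ⊆ {w ∈ K | w.length = n} :=
      fun u hu => ⟨hMK (hzM u hu.2), hu.1⟩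
    calc Complexity z n ≤ {w ∈ K | w.length = n}.ncard :=
          Set.ncard_le_ncard hsub ((List.finite_length_eq A n).subset fun w hw => hw.2)
      _ ≤ h n := hKcard n
  have hzur : UniformlyRecurrent z := by
    intro u hu
    obtain ⟨N, hN⟩ := hMrec u (hzM u hu)
    exact ⟨N, fun w hw hlen => hN w (hzM w hw) hlen⟩
  obtain ⟨u, huS, huz⟩ := hyp z hzur hzcomp
  have huK : u ∈ K := hMK (hzM u huz)
  have hmem : ({k | u <:+: v k} ∩ {k | u.length ≤ k}) ∈ U :=
    Filter.inter_mem huK (hco u.length)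
  obtain ⟨k, hk1, hk2⟩ := Filter.nonempty_of_mem hmem
  exact hvavoid k u huS hk2 hk1
end

section
/- For every right-infinite word x over a finite alphabet, there exists a uniformly recurrent right-infinite word y such that every finite factor of y is a factor of x. -/
namespace Stmt9Aux

variable {A : Type*}

/-- the window of `z` starting at `i` of length `m` -/
def word (z : ℕ → A) (i m : ℕ) : List A :=
  (List.range m).map fun t => z (i + t)

lemma word_length (z : ℕ → A) (i m : ℕ) : (word z i m).length = m := by
  simp [word]

lemma word_add (z : ℕ → A) (i a b : ℕ) :
    word z i (a + b) = word z i a ++ word z (i + a) b := by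
  simp only [word, List.range_add, List.map_append, List.map_map]
  congr 1
  apply List.map_congr_left
  intro t ht
  simp only [Function.comp_apply]
  congr 1
  omega

def shift (z : ℕ → A) : ℕ → A := fun n => z (n + 1)

lemma shift_iterate (z : ℕ → A) (n k : ℕ) : (shift^[n] z) k = z (k + n) := by
  induction n generalizing z with
  | zero => rfl
  | succ n ih => rw [Function.iterate_succ_apply, ih]; rfl

end Stmt9Aux

open Stmt9Aux in
theorem stmt9 {A : Type*} [Fintype A] (x : ℕ → A) :
    ∃ y : ℕ → A, UniformlyRecurrent y ∧
      ∀ u : List A, FactorOf u y → FactorOf u x := by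
  classical
  letI : TopologicalSpace A := ⊥
  haveI : DiscreteTopology A := ⟨rfl⟩
  haveI : CompactSpace A := Finite.compactSpace
  set T : (ℕ → A) → (ℕ → A) := shift with hT
  have hTc : Continuous T := continuous_pi fun n => continuous_apply (n + 1)
  have hTit : ∀ (z : ℕ → A) (n k : ℕ), (T^[n] z) k = z (k + n) := shift_iterate
  set Orb : (ℕ → A) → Set (ℕ → A) := fun z => Set.range fun n => T^[n] z with hOrb
  have hOrbMaps : ∀ z, Set.MapsTo T (Orb z) (Orb z) := by
    rintro z _ ⟨n, rfl⟩
    exact ⟨n + 1, by simp only [Function.iterate_succ_apply']⟩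
  have hClMaps : ∀ z, Set.MapsTo T (closure (Orb z)) (closure (Orb z)) :=
    fun z => (hOrbMaps z).closure hTc
  have hOrbSub : ∀ {Y : Set (ℕ → A)}, Set.MapsTo T Y Y → ∀ {z}, z ∈ Y → Orb z ⊆ Y := by
    intro Y hY z hz
    rintro _ ⟨n, rfl⟩
    show T^[n] z ∈ Y
    induction n with
    | zero => exact hz
    | succ n ih => rw [Function.iterate_succ_apply']; exact hY ih
  have hCyl : ∀ (w : ℕ → A) (m : ℕ), IsOpen {z : ℕ → A | ∀ k < m, z k = w k} := by
    intro w m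
    have : {z : ℕ → A | ∀ k < m, z k = w k} =
        ⋂ k ∈ Finset.range m, (fun z : ℕ → A => z k) ⁻¹' {w k} := by
      ext z; simp
    rw [this]
    exact isOpen_biInter_finset fun k _ =>
      (continuous_apply k).isOpen_preimage _ (isOpen_discrete _)
  set S : Set (Set (ℕ → A)) :=
    {Y | Y.Nonempty ∧ IsClosed Y ∧ Set.MapsTo T Y Y ∧ Y ⊆ closure (Orb x)} with hS
  have hY0 : closure (Orb x) ∈ S :=
    ⟨⟨x, subset_closure ⟨0, rfl⟩⟩, isClosed_closure, hClMaps x, le_refl _⟩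
  obtain ⟨Y, -, hYmin⟩ : ∃ m, m ⊆ closure (Orb x) ∧ Minimal (· ∈ S) m := by
    apply zorn_superset_nonempty S ?_ _ hY0
    intro c hcS hchain hcne
    refine ⟨⋂₀ c, ⟨?_, ?_, ?_, ?_⟩, fun s hs => Set.sInter_subset_of_mem hs⟩
    · haveI : Nonempty c := hcne.to_subtype
      have hne := IsCompact.nonempty_iInter_of_directed_nonempty_isCompact_isClosed
        (fun s : c => (s : Set (ℕ → A))) ?_ ?_ ?_ ?_
      · rwa [Set.sInter_eq_iInter]
      · intro s t
        rcases hchain.total s.2 t.2 with h | h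
        · exact ⟨s, le_refl _, h⟩
        · exact ⟨t, h, le_refl _⟩
      · exact fun s => (hcS s.2).1
      · exact fun s => ((hcS s.2).2.1).isCompact
      · exact fun s => (hcS s.2).2.1
    · exact isClosed_sInter fun s hs => (hcS hs).2.1
    · intro z hz s hs
      exact (hcS hs).2.2.1 (hz s hs)
    · obtain ⟨s, hs⟩ := hcne
      exact (Set.sInter_subset_of_mem hs).trans (hcS hs).2.2.2
  obtain ⟨⟨y, hy⟩, hYcl, hYmaps, hYsub⟩ := hYmin.prop
  have hminOrb : ∀ z ∈ Y, closure (Orb z) = Y := by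
    intro z hz
    have h1 : closure (Orb z) ⊆ Y := closure_minimal (hOrbSub hYmaps hz) hYcl
    have h2 : closure (Orb z) ∈ S :=
      ⟨⟨z, subset_closure ⟨0, rfl⟩⟩, isClosed_closure, hClMaps z, h1.trans hYsub⟩
    exact le_antisymm h1 (hYmin.2 h2 h1)
  refine ⟨y, ?_, ?_⟩
  · -- uniform recurrence
    intro u hu
    obtain ⟨i, hui⟩ := hu
    set m := u.length with hm
    set y' := T^[i] y with hy'
    have hy'Y : y' ∈ Y := hOrbSub hYmaps hy ⟨i, rfl⟩
    set U : Set (ℕ → A) := {z | ∀ k < m, z k = y' k} with hUdef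
    have hUopen : IsOpen U := hCyl y' m
    have hcover : Y ⊆ ⋃ n, T^[n] ⁻¹' U := by
      intro z hz
      have hmem : y' ∈ closure (Orb z) := (hminOrb z hz).symm ▸ hy'Y
      obtain ⟨w, hwU, hwOrb⟩ := mem_closure_iff.mp hmem U hUopen (fun k _ => rfl)
      obtain ⟨n, rfl⟩ := hwOrb
      exact Set.mem_iUnion.mpr ⟨n, hwU⟩
    obtain ⟨t, ht⟩ := (hYcl.isCompact).elim_finite_subcover (fun n => T^[n] ⁻¹' U)
      (fun n => hUopen.preimage (hTc.iterate n)) hcover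
    set N := t.sup id with hN
    refine ⟨N + m, ?_⟩
    intro v hv hvlen
    obtain ⟨j, hvj⟩ := hv
    set l := v.length with hl0
    have hzY : T^[j] y ∈ Y := hOrbSub hYmaps hy ⟨j, rfl⟩
    obtain ⟨n, hnt, hnU⟩ : ∃ n ∈ t, T^[n] (T^[j] y) ∈ U := by
      have := ht hzY
      simpa using this
    have hnN : n ≤ N := Finset.le_sup (f := id) hnt
    have hu2 : u = word y (j + n) m := by
      rw [hui]
      apply List.map_congr_left
      intro k hk
      rw [List.mem_range] at hk
      have h1 := hnU k hk
      rw [hTit, hTit] at h1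
      have h2 : y' k = y (k + i) := hTit y i k
      rw [h2] at h1
      rw [show i + k = k + i by omega, ← h1]
      congr 1
      omega
    have hlen : n + m ≤ l := le_trans (by omega) hvlen
    refine ⟨word y j n, word y (j + n + m) (l - n - m), ?_⟩
    have hl : word y j l =
        word y j n ++ word y (j + n) m ++ word y (j + n + m) (l - n - m) := by
      rw [List.append_assoc, ← word_add, ← word_add]
      congr 1
      omega
    have hvj' : v = word y j l := hvj
    rw [hu2, hvj', hl]
  · -- factors of y are factors of x
    rintro u ⟨i, hui⟩
    have hz : y ∈ closure (Orb x) := hYsub hy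
    set m := u.length with hm
    obtain ⟨w, hwU, hwOrb⟩ := mem_closure_iff.mp hz {z | ∀ k < i + m, z k = y k}
      (hCyl y (i + m)) (fun k _ => rfl)
    obtain ⟨n, rfl⟩ := hwOrb
    refine ⟨n + i, ?_⟩
    rw [hui, List.length_map, List.length_range]
    apply List.map_congr_left
    intro k hk
    rw [List.mem_range] at hk
    have h1 : T^[n] x (i + k) = y (i + k) := hwU (i + k) (by omega)
    rw [hTit] at h1
    rw [← h1]
    congr 1
    omega
end

section
/- Every balanced binary word of length 9 contains a factor that is a (5/2)-power of period at most 3, and 9 is the smallest such length. -/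
/-- `u` is a `(5/2)`-power of period `p`. -/
def IsFiveHalvesPower (u : List Bool) (p : ℕ) : Prop :=
  1 ≤ p ∧ HasPeriodL u p ∧ u.length = ⌈(5 * (p : ℚ)) / 2⌉₊


/-- decidable list of all infixes -/
def infixesL (w : List Bool) : List (List Bool) := w.tails.flatMap List.inits

lemma mem_infixesL {u w : List Bool} : u ∈ infixesL w ↔ u <:+: w := by
  simp [infixesL, List.mem_flatMap, List.mem_tails, List.mem_inits,
    List.infix_iff_prefix_suffix]
  tauto

def balB (w : List Bool) : Prop :=
  ∀ u ∈ infixesL w, ∀ v ∈ infixesL w, u.length = v.length →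
    ∀ a : Bool, ((u.count a : ℤ) - (v.count a : ℤ)).natAbs ≤ 1

instance : DecidablePred balB := fun w => by unfold balB; infer_instance

lemma balanced_iff (w : List Bool) : BalancedWord w ↔ balB w := by
  constructor
  · intro h u hu v hv; exact h u v (mem_infixesL.1 hu) (mem_infixesL.1 hv)
  · intro h u v hu hv; exact h u (mem_infixesL.2 hu) v (mem_infixesL.2 hv)

def periodB (u : List Bool) (p : ℕ) : Prop :=
  ∀ i < u.length, i + p < u.length → u[i]? = u[i + p]?

instance : ∀ u p, Decidable (periodB u p) := fun u p => by unfold periodB; infer_instance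

lemma periodB_iff (u : List Bool) (p : ℕ) : HasPeriodL u p ↔ periodB u p := by
  constructor
  · intro h i _ hip; exact h i hip
  · intro h i hip; exact h i (by omega) hip

def goodB (w : List Bool) : Prop :=
  ∃ u ∈ infixesL w, ∃ p ∈ [1,2,3], periodB u p ∧ u.length = (5*p+1)/2

instance : DecidablePred goodB := fun w => by unfold goodB; infer_instance

lemma ceil_eval (p : ℕ) (hp : 1 ≤ p) (hp3 : p ≤ 3) :
    ⌈(5 * (p : ℚ)) / 2⌉₊ = (5*p+1)/2 := by
  interval_cases p <;> (rw [Nat.ceil_eq_iff (by norm_num)]; norm_num)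

lemma good_iff (w : List Bool) :
    (∃ u p, p ≤ 3 ∧ u <:+: w ∧ IsFiveHalvesPower u p) ↔ goodB w := by
  constructor
  · rintro ⟨u, p, hp3, hu, hp1, hper, hlen⟩
    refine ⟨u, mem_infixesL.2 hu, p, ?_, (periodB_iff u p).1 hper, ?_⟩
    · interval_cases p <;> simp
    · rw [hlen, ceil_eval p hp1 hp3]
  · rintro ⟨u, hu, p, hp, hper, hlen⟩
    have hp1 : 1 ≤ p := by fin_cases hp <;> norm_num
    have hp3 : p ≤ 3 := by fin_cases hp <;> norm_num
    exact ⟨u, p, hp3, mem_infixesL.1 hu,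
      hp1, (periodB_iff u p).2 hper, by rw [hlen, ceil_eval p hp1 hp3]⟩

set_option maxHeartbeats 4000000 in
lemma key1 : ∀ a b c d e f g h i : Bool,
    balB [a,b,c,d,e,f,g,h,i] → goodB [a,b,c,d,e,f,g,h,i] := by decide

set_option maxHeartbeats 1000000 in
lemma key2 : balB [false,false,true,false,false,true,false,true] ∧
    ¬ goodB [false,false,true,false,false,true,false,true] := by decide

theorem stmt13 :
    (∀ w : List Bool, BalancedWord w → w.length = 9 →
      ∃ u p, p ≤ 3 ∧ u <:+: w ∧ IsFiveHalvesPower u p) ∧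
    (∃ w : List Bool, BalancedWord w ∧ w.length = 8 ∧
      ¬ ∃ u p, p ≤ 3 ∧ u <:+: w ∧ IsFiveHalvesPower u p) := by
  constructor
  · intro w hb hl
    rcases w with _|⟨a,_|⟨b,_|⟨c,_|⟨d,_|⟨e,_|⟨f,_|⟨g,_|⟨h,_|⟨i,_|⟨j,w⟩⟩⟩⟩⟩⟩⟩⟩⟩⟩ <;>
      simp only [List.length] at hl <;> try omega
    exact (good_iff _).2 (key1 a b c d e f g h i ((balanced_iff _).1 hb))
  · refine ⟨[false,false,true,false,false,true,false,true],
      (balanced_iff _).2 key2.1, rfl, fun hg => key2.2 ((good_iff _).1 hg)⟩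
end
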